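/- arXiv:2311.12693 — 2 statements merged into one kernel-verified Lean document; each statement's English description precedes it below -/
import Mathlib

section
/- Assume (H) and ω > 0. For every u ∈ H¹(ℝᴺ)\{0} with K(u) < 0, one has K(u) < S_ω(u) − m_ω. -/
open MeasureTheory Real Filter Topology Set
open scoped ENNReal

noncomputable section

/-- Euclidean space `ℝᴺ`. -/
abbrev Ev (N : ℕ) := EuclideanSpace ℝ (Fin N)

/-- Hypothesis (H). -/
structure HypH (N : ℕ) (b₁ b₂ p₁ p₂ : ℝ) : Prop where
  hN : 1 ≤ N
  hb₁ : 0 < b₁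
  hb₁' : b₁ < min 2 (N : ℝ)
  hb₂ : 0 < b₂
  hb₂' : b₂ < min 2 (N : ℝ)
  hp₁ : 2 < p₁
  hp₂ : 2 < p₂
  hmass : 2 < ((N : ℝ) * (p₁ - 2) + 2 * b₁) / 2
  horder : ((N : ℝ) * (p₁ - 2) + 2 * b₁) / 2 < ((N : ℝ) * (p₂ - 2) + 2 * b₂) / 2
  hsub₁ : 3 ≤ N → p₁ < 2 * ((N : ℝ) - b₁) / ((N : ℝ) - 2)
  hsub₂ : 3 ≤ N → p₂ < 2 * ((N : ℝ) - b₂) / ((N : ℝ) - 2)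

variable {N : ℕ}

/-- `∫ |∇u|²`. -/
def gradIntegral (u : Ev N → ℂ) : ℝ := ∫ x : Ev N, ‖fderiv ℝ u x‖ ^ 2

/-- `∫ |u|²`. -/
def massIntegral (u : Ev N → ℂ) : ℝ := ∫ x : Ev N, ‖u x‖ ^ 2

/-- `∫ |x|^(-b) |u|^p`. -/
def wIntegral (b p : ℝ) (u : Ev N → ℂ) : ℝ := ∫ x : Ev N, ‖x‖ ^ (-b) * ‖u x‖ ^ p

/-- The action functional `S_ω`. -/
def Sfun (b₁ b₂ p₁ p₂ ω : ℝ) (u : Ev N → ℂ) : ℝ :=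
  (1 / 2) * gradIntegral u + (ω / 2) * massIntegral u
    + (1 / p₁) * wIntegral b₁ p₁ u - (1 / p₂) * wIntegral b₂ p₂ u

/-- The Pohozaev functional `K`. -/
def Kfun (b₁ b₂ p₁ p₂ : ℝ) (u : Ev N → ℂ) : ℝ :=
  gradIntegral u + (((N : ℝ) * (p₁ - 2) + 2 * b₁) / (2 * p₁)) * wIntegral b₁ p₁ u
    - (((N : ℝ) * (p₂ - 2) + 2 * b₂) / (2 * p₂)) * wIntegral b₂ p₂ u

/-- Membership in `H¹(ℝᴺ, ℂ)`. -/
structure MemH1 (u : Ev N → ℂ) : Prop where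
  diff : Differentiable ℝ u
  memL2 : MemLp u 2 (volume : Measure (Ev N))
  gradL2 : MemLp (fun x => fderiv ℝ u x) 2 (volume : Measure (Ev N))

/-- Membership in the space `X` (completion of `C_c^∞` under
`‖∇·‖₂ + ‖|x|^{-b₁/p₁} ·‖_{p₁}`). -/
structure MemX (b₁ p₁ : ℝ) (u : Ev N → ℂ) : Prop where
  diff : Differentiable ℝ u
  gradL2 : MemLp (fun x => fderiv ℝ u x) 2 (volume : Measure (Ev N))
  wInt : Integrable (fun x : Ev N => ‖x‖ ^ (-b₁) * ‖u x‖ ^ p₁) (volume : Measure (Ev N))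

/-- `i`-th partial derivative. -/
def partialDeriv (u : Ev N → ℂ) (i : Fin N) (x : Ev N) : ℂ :=
  fderiv ℝ u x (EuclideanSpace.single i (1 : ℝ))

/-- Test functions: smooth and compactly supported. -/
def TestFun (ψ : Ev N → ℂ) : Prop := ContDiff ℝ (⊤ : ℕ∞) ψ ∧ HasCompactSupport ψ

/-- Weak (H¹) solution of `-Δu + ωu = |x|^{-b₂}|u|^{p₂-2}u - |x|^{-b₁}|u|^{p₁-2}u`. -/
def WeakSol (b₁ b₂ p₁ p₂ ω : ℝ) (u : Ev N → ℂ) : Prop :=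
  ∀ ψ : Ev N → ℂ, TestFun ψ →
    (∑ i : Fin N, ∫ x : Ev N, partialDeriv u i x * (starRingEnd ℂ) (partialDeriv ψ i x))
        + (ω : ℂ) * (∫ x : Ev N, u x * (starRingEnd ℂ) (ψ x))
      = ∫ x : Ev N,
          (((‖x‖ ^ (-b₂) * ‖u x‖ ^ (p₂ - 2) - ‖x‖ ^ (-b₁) * ‖u x‖ ^ (p₁ - 2) : ℝ)) : ℂ)
            * u x * (starRingEnd ℂ) (ψ x)

/-- Ground states of `(E_ω)` in `H¹`: nontrivial solutions minimizing `S_ω` among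
all nontrivial `H¹` solutions. -/
def IsGroundState (b₁ b₂ p₁ p₂ ω : ℝ) (Q : Ev N → ℂ) : Prop :=
  MemH1 Q ∧ Q ≠ 0 ∧ WeakSol b₁ b₂ p₁ p₂ ω Q ∧
    ∀ φ : Ev N → ℂ, MemH1 φ → φ ≠ 0 → WeakSol b₁ b₂ p₁ p₂ ω φ →
      Sfun b₁ b₂ p₁ p₂ ω Q ≤ Sfun b₁ b₂ p₁ p₂ ω φ

/-- Ground states of `(E_0)` in `X`. -/
def IsGroundStateX (b₁ b₂ p₁ p₂ : ℝ) (Q : Ev N → ℂ) : Prop :=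
  MemX b₁ p₁ Q ∧ Q ≠ 0 ∧ WeakSol b₁ b₂ p₁ p₂ 0 Q ∧
    ∀ φ : Ev N → ℂ, MemX b₁ p₁ φ → φ ≠ 0 → WeakSol b₁ b₂ p₁ p₂ 0 φ →
      Sfun b₁ b₂ p₁ p₂ 0 Q ≤ Sfun b₁ b₂ p₁ p₂ 0 φ

/-- Positivity (as a complex-valued function taking positive real values). -/
def PosFun (u : Ev N → ℂ) : Prop := ∀ x, (u x).im = 0 ∧ 0 < (u x).re

/-- Radial symmetry. -/
def Radial (u : Ev N → ℂ) : Prop := ∀ x y : Ev N, ‖x‖ = ‖y‖ → u x = u y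

/-- Radially decreasing (non-increasing in `‖x‖`). -/
def RadDecr (u : Ev N → ℂ) : Prop := ∀ x y : Ev N, ‖x‖ ≤ ‖y‖ → (u y).re ≤ (u x).re

/-- Ground state energy level `m_ω` over `H¹` (used for `ω > 0`). -/
def mOmega (N : ℕ) (b₁ b₂ p₁ p₂ ω : ℝ) : ℝ :=
  sInf {c : ℝ | ∃ φ : Ev N → ℂ, MemH1 φ ∧ φ ≠ 0 ∧ Kfun b₁ b₂ p₁ p₂ φ = 0 ∧
    c = Sfun b₁ b₂ p₁ p₂ ω φ}

/-- Ground state energy level `m_0` over `X` (the case `ω = 0`). -/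
def mZero (N : ℕ) (b₁ b₂ p₁ p₂ : ℝ) : ℝ :=
  sInf {c : ℝ | ∃ φ : Ev N → ℂ, MemX b₁ p₁ φ ∧ φ ≠ 0 ∧ Kfun b₁ b₂ p₁ p₂ φ = 0 ∧
    c = Sfun b₁ b₂ p₁ p₂ 0 φ}

/-! Real-valued counterparts (for positive solutions). -/

def gradIntegralR (u : Ev N → ℝ) : ℝ := ∫ x : Ev N, ‖fderiv ℝ u x‖ ^ 2

def partialDerivR (u : Ev N → ℝ) (i : Fin N) (x : Ev N) : ℝ :=
  fderiv ℝ u x (EuclideanSpace.single i (1 : ℝ))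

def TestFunR (ψ : Ev N → ℝ) : Prop := ContDiff ℝ (⊤ : ℕ∞) ψ ∧ HasCompactSupport ψ

structure MemH1R (u : Ev N → ℝ) : Prop where
  diff : Differentiable ℝ u
  memL2 : MemLp u 2 (volume : Measure (Ev N))
  gradL2 : MemLp (fun x => fderiv ℝ u x) 2 (volume : Measure (Ev N))

structure MemXR (b₁ p₁ : ℝ) (u : Ev N → ℝ) : Prop where
  diff : Differentiable ℝ u
  gradL2 : MemLp (fun x => fderiv ℝ u x) 2 (volume : Measure (Ev N))
  wInt : Integrable (fun x : Ev N => ‖x‖ ^ (-b₁) * |u x| ^ p₁) (volume : Measure (Ev N))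

/-- Weak solution, real-valued (positive) setting:
`-Δu + ωu = |x|^{-b₂}u^{p₂-1} - |x|^{-b₁}u^{p₁-1}`. -/
def WeakSolR (b₁ b₂ p₁ p₂ ω : ℝ) (u : Ev N → ℝ) : Prop :=
  ∀ ψ : Ev N → ℝ, TestFunR ψ →
    (∑ i : Fin N, ∫ x : Ev N, partialDerivR u i x * partialDerivR ψ i x)
        + ω * (∫ x : Ev N, u x * ψ x)
      = ∫ x : Ev N,
          (‖x‖ ^ (-b₂) * u x ^ (p₂ - 1) - ‖x‖ ^ (-b₁) * u x ^ (p₁ - 1)) * ψ x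

def RadialR (u : Ev N → ℝ) : Prop := ∀ x y : Ev N, ‖x‖ = ‖y‖ → u x = u y

def RadDecrR (u : Ev N → ℝ) : Prop := ∀ x y : Ev N, ‖x‖ ≤ ‖y‖ → u y ≤ u x

/-- Pointwise Laplacian. -/
def lap (u : Ev N → ℂ) (x : Ev N) : ℂ :=
  ∑ i : Fin N, fderiv ℝ (fun y => partialDeriv u i y) x (EuclideanSpace.single i (1 : ℝ))

/-- Ground state energy level for `ω ≥ 0`: infimum over `H¹` when `ω > 0`,
and over `X` when `ω = 0`. -/
def groundLevel (N : ℕ) (b₁ b₂ p₁ p₂ ω : ℝ) : ℝ :=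
  sInf {c : ℝ | ∃ φ : Ev N → ℂ,
    ((0 < ω ∧ MemH1 φ) ∨ (ω = 0 ∧ MemX b₁ p₁ φ)) ∧ φ ≠ 0 ∧
    Kfun b₁ b₂ p₁ p₂ φ = 0 ∧ c = Sfun b₁ b₂ p₁ p₂ ω φ}

/-- The set `A⁻_ω`. -/
def Aminus (N : ℕ) (b₁ b₂ p₁ p₂ ω : ℝ) : Set (Ev N → ℂ) :=
  {φ | MemH1 φ ∧ φ ≠ 0 ∧ Sfun b₁ b₂ p₁ p₂ ω φ < groundLevel N b₁ b₂ p₁ p₂ ω ∧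
       Kfun b₁ b₂ p₁ p₂ φ < 0}

/-- `u : [0, Tmax) → H¹` is the maximal solution of
`i∂ₜu + Δu = |x|^{-b₁}|u|^{p₁-2}u - |x|^{-b₂}|u|^{p₂-2}u`, `u(0) = u₀`,
conserving mass and energy, with the blow-up alternative. -/
structure IsMaxSol (b₁ b₂ p₁ p₂ : ℝ) (u₀ : Ev N → ℂ) (u : ℝ → Ev N → ℂ)
    (Tmax : ℝ≥0∞) : Prop where
  posT : 0 < Tmax
  init : u 0 = u₀
  memH1 : ∀ t : ℝ, 0 ≤ t → ENNReal.ofReal t < Tmax → MemH1 (u t)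
  tdiff : ∀ t : ℝ, 0 ≤ t → ENNReal.ofReal t < Tmax → ∀ x : Ev N, x ≠ 0 →
    DifferentiableAt ℝ (fun s => u s x) t
  eqn : ∀ t : ℝ, 0 ≤ t → ENNReal.ofReal t < Tmax → ∀ x : Ev N, x ≠ 0 →
    Complex.I * deriv (fun s => u s x) t + lap (u t) x
      = ((‖x‖ ^ (-b₁) * ‖u t x‖ ^ (p₁ - 2) : ℝ) : ℂ) * u t x
        - ((‖x‖ ^ (-b₂) * ‖u t x‖ ^ (p₂ - 2) : ℝ) : ℂ) * u t x
  mass : ∀ t : ℝ, 0 ≤ t → ENNReal.ofReal t < Tmax → massIntegral (u t) = massIntegral u₀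
  energy : ∀ t : ℝ, 0 ≤ t → ENNReal.ofReal t < Tmax →
    Sfun b₁ b₂ p₁ p₂ 0 (u t) = Sfun b₁ b₂ p₁ p₂ 0 u₀
  maximal : Tmax ≠ ⊤ →
    Tendsto (fun t => gradIntegral (u t)) (𝓝[<] Tmax.toReal) atTop

/-- `L²`-invariant rescaling `u_t(x) = t^{N/2} u(tx)`. -/
def scaleFun (t : ℝ) (u : Ev N → ℂ) : Ev N → ℂ := fun x => (t ^ ((N : ℝ) / 2) : ℝ) • u (t • x)

/-- The norm of the space `X`. -/
def XNorm (b₁ p₁ : ℝ) (u : Ev N → ℂ) : ℝ :=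
  Real.sqrt (gradIntegral u) + (wIntegral b₁ p₁ u) ^ (1 / p₁)



section AuxLemmas

open Real


open Real

/-- IVT lemma: existence of a zero of `f(x) = x^2 a + x^α₁ d₁ - x^α₂ d₂` in `(0,1]`. -/
lemma keyIVT {a d₁ d₂ α₁ α₂ : ℝ} (ha : 0 < a) (hd₁ : 0 ≤ d₁) (hα₁ : 2 < α₁) (hα₂ : α₁ < α₂)
    (hK : a + d₁ - d₂ < 0) :
    ∃ l : ℝ, 0 < l ∧ l ≤ 1 ∧ l ^ (2:ℝ) * a + l ^ α₁ * d₁ - l ^ α₂ * d₂ = 0 := by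
  set f : ℝ → ℝ := fun x => x ^ (2:ℝ) * a + x ^ α₁ * d₁ - x ^ α₂ * d₂ with hf
  have hd₂ : 0 < d₂ := by nlinarith
  set r : ℝ := (a / (2 * d₂)) ^ (α₂ - 2)⁻¹ with hr
  have hβ : 0 < α₂ - 2 := by linarith
  have hrpos : 0 < r := rpow_pos_of_pos (by positivity) _
  set ε : ℝ := min (1/2) r with hε
  have hεpos : 0 < ε := lt_min (by norm_num) hrpos
  have hε1 : ε ≤ 1 := le_trans (min_le_left _ _) (by norm_num)
  have hfε : 0 < f ε := by
    have h1 : ε ^ (α₂ - 2) ≤ r ^ (α₂ - 2) :=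
      rpow_le_rpow hεpos.le (min_le_right _ _) hβ.le
    have h2 : r ^ (α₂ - 2) = a / (2 * d₂) := rpow_inv_rpow (by positivity) hβ.ne'
    have h3 : ε ^ α₂ = ε ^ (2:ℝ) * ε ^ (α₂ - 2) := by
      rw [← rpow_add hεpos]; ring_nf
    have h4 : ε ^ α₂ * d₂ ≤ ε ^ (2:ℝ) * (a / 2) := by
      rw [h3]
      have : ε ^ (α₂ - 2) * d₂ ≤ a / 2 := by
        rw [h2] at h1
        calc ε ^ (α₂ - 2) * d₂ ≤ (a / (2 * d₂)) * d₂ :=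
              mul_le_mul_of_nonneg_right h1 hd₂.le
          _ = a / 2 := by field_simp
      calc ε ^ (2:ℝ) * ε ^ (α₂ - 2) * d₂ = ε ^ (2:ℝ) * (ε ^ (α₂ - 2) * d₂) := by ring
        _ ≤ ε ^ (2:ℝ) * (a / 2) := by
            exact mul_le_mul_of_nonneg_left this (rpow_nonneg hεpos.le _)
    have h5 : 0 ≤ ε ^ α₁ * d₁ := mul_nonneg (rpow_nonneg hεpos.le _) hd₁
    have h6 : 0 < ε ^ (2:ℝ) * a := mul_pos (rpow_pos_of_pos hεpos _) ha
    have h7 : 0 < ε ^ (2:ℝ) * (a/2) := mul_pos (rpow_pos_of_pos hεpos _) (by linarith)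
    simp only [hf]
    nlinarith
  have hf1 : f 1 < 0 := by simp only [hf, one_rpow]; linarith
  have hcont : ContinuousOn f (Set.Icc ε 1) := by
    apply ContinuousOn.sub (ContinuousOn.add ?_ ?_) ?_ <;>
    · apply ContinuousOn.mul ?_ continuousOn_const
      intro x hx
      exact (Real.continuousAt_rpow_const x _ (Or.inl (ne_of_gt (lt_of_lt_of_le hεpos hx.1)))).continuousWithinAt
  have h0mem : (0:ℝ) ∈ Set.Icc (f 1) (f ε) := ⟨hf1.le, hfε.le⟩
  obtain ⟨l, hl, hfl⟩ := intermediate_value_Icc' hε1 hcont h0mem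
  exact ⟨l, lt_of_lt_of_le hεpos hl.1, hl.2, hfl⟩

/-- Monotonicity lemma: value at the zero-crossing is below `S(1) - K(1)`. -/
lemma keyMono {a e₁ e₂ α₁ α₂ l : ℝ} (ha : 0 ≤ a) (he₁ : 0 ≤ e₁)
    (hα₁ : 2 < α₁) (hα₂ : α₁ < α₂) (hl0 : 0 < l) (hl1 : l ≤ 1)
    (hK : a + α₁ * e₁ - α₂ * e₂ < 0) :
    l ^ 2 * (a / 2) + l ^ α₁ * e₁ - l ^ α₂ * e₂
      < (a / 2 + e₁ - e₂) - (a + α₁ * e₁ - α₂ * e₂) := by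
  set K₁ : ℝ := a + α₁ * e₁ - α₂ * e₂ with hK₁
  set g : ℝ → ℝ := fun x => x ^ 2 * (a / 2) + x ^ α₁ * e₁ - x ^ α₂ * e₂ - x ^ 2 * (K₁ / 2)
    with hg
  set G : ℝ → ℝ := fun x => (2 * x) * (a / 2) + α₁ * x ^ (α₁ - 1) * e₁
      - α₂ * x ^ (α₂ - 1) * e₂ - (2 * x) * (K₁ / 2) with hG
  have hderiv : ∀ x : ℝ, 0 < x → HasDerivAt g (G x) x := by
    intro x hx
    have h1 : HasDerivAt (fun x : ℝ => x ^ 2 * (a / 2)) ((2 * x) * (a / 2)) x := by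
      simpa using (hasDerivAt_pow 2 x).mul_const (a / 2)
    have h2 : HasDerivAt (fun x : ℝ => x ^ α₁ * e₁) (α₁ * x ^ (α₁ - 1) * e₁) x :=
      (Real.hasDerivAt_rpow_const (Or.inl hx.ne')).mul_const e₁
    have h3 : HasDerivAt (fun x : ℝ => x ^ α₂ * e₂) (α₂ * x ^ (α₂ - 1) * e₂) x :=
      (Real.hasDerivAt_rpow_const (Or.inl hx.ne')).mul_const e₂
    have h4 : HasDerivAt (fun x : ℝ => x ^ 2 * (K₁ / 2)) ((2 * x) * (K₁ / 2)) x := by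
      simpa using (hasDerivAt_pow 2 x).mul_const (K₁ / 2)
    exact ((h1.add h2).sub h3).sub h4
  have hGnonneg : ∀ x : ℝ, 0 < x → x ≤ 1 → 0 ≤ G x := by
    intro x hx0 hx1
    have e1 : x * x ^ (α₁ - 1) = x ^ α₁ := by
      have h := Real.rpow_add hx0 1 (α₁ - 1)
      rw [Real.rpow_one] at h
      rw [← h]; ring_nf
    have e2 : x * x ^ (α₂ - 1) = x ^ α₂ := by
      have h := Real.rpow_add hx0 1 (α₂ - 1)
      rw [Real.rpow_one] at h
      rw [← h]; ring_nf
    have hxG : x * G x = x ^ 2 * a + α₁ * x ^ α₁ * e₁ - α₂ * x ^ α₂ * e₂ - x ^ 2 * K₁ := by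
      have : x * G x = x ^ 2 * a + α₁ * (x * x ^ (α₁ - 1)) * e₁
          - α₂ * (x * x ^ (α₂ - 1)) * e₂ - x ^ 2 * K₁ := by
        simp only [hG]; ring
      rw [this, e1, e2]
    have hBA : x ^ α₁ ≤ x ^ 2 := by
      have := Real.rpow_le_rpow_of_exponent_ge hx0 hx1 (le_of_lt hα₁)
      calc x ^ α₁ ≤ x ^ (2:ℝ) := this
        _ = x ^ 2 := by rw [← Real.rpow_natCast x 2]; norm_num
    have hCB : x ^ α₂ ≤ x ^ α₁ := Real.rpow_le_rpow_of_exponent_ge hx0 hx1 hα₂.le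
    have he₂ : 0 ≤ α₂ * e₂ := by nlinarith
    have he₁' : 0 ≤ α₁ * e₁ := by nlinarith
    have hxGnn : 0 ≤ x * G x := by
      rw [hxG, hK₁]
      nlinarith [mul_nonneg (sub_nonneg.2 hBA) (show (0:ℝ) ≤ α₂ * e₂ - α₁ * e₁ by nlinarith),
        mul_nonneg (sub_nonneg.2 hCB) he₂]
    exact nonneg_of_mul_nonneg_right hxGnn hx0
  have hmono : MonotoneOn g (Set.Icc l 1) := by
    apply monotoneOn_of_deriv_nonneg (convex_Icc l 1)
    · intro x hx
      exact (hderiv x (lt_of_lt_of_le hl0 hx.1)).continuousAt.continuousWithinAt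
    · intro x hx
      rw [interior_Icc] at hx
      exact (hderiv x (lt_trans hl0 hx.1)).differentiableAt.differentiableWithinAt
    · intro x hx
      rw [interior_Icc] at hx
      rw [(hderiv x (lt_trans hl0 hx.1)).deriv]
      exact hGnonneg x (lt_trans hl0 hx.1) hx.2.le
  have hgl : g l ≤ g 1 := hmono (Set.mem_Icc.2 ⟨le_refl l, hl1⟩) (Set.mem_Icc.2 ⟨hl1, le_refl 1⟩) hl1
  have hg1 : g 1 = a / 2 + e₁ - e₂ - K₁ / 2 := by simp [hg]
  have hgl' : g l = l ^ 2 * (a / 2) + l ^ α₁ * e₁ - l ^ α₂ * e₂ - l ^ 2 * (K₁ / 2) := rfl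
  rw [hg1, hgl'] at hgl
  nlinarith [sq_nonneg l, hK]

/-- A real-line slice lemma: an everywhere-differentiable function with a.e. zero derivative
is constant (Denjoy-type, via FTC with integrable derivative). -/
lemma const_of_deriv_ae_zero {g : ℝ → ℂ} {g' : ℝ → ℂ}
    (hg : ∀ s : ℝ, HasDerivAt g (g' s) s) (h0 : ∀ᵐ s : ℝ, g' s = 0) (s : ℝ) :
    g s = g 0 := by
  have hii : IntervalIntegrable g' volume 0 s := by
    have : g' =ᵐ[volume] (fun _ => (0:ℂ)) := h0
    constructor <;>
    · exact (integrable_zero _ _ _).congr (Filter.EventuallyEq.symm (ae_restrict_of_ae this))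
  have hftc := intervalIntegral.integral_eq_sub_of_hasDerivAt (fun x _ => hg x) hii
  have hzero : ∫ x in (0:ℝ)..s, g' x = 0 := by
    rw [intervalIntegral.integral_congr_ae]
    · exact intervalIntegral.integral_zero
    · filter_upwards [h0] with x hx _ using hx
  rw [hzero] at hftc
  exact sub_eq_zero.mp hftc.symm

/-- If `u : ℝᴺ → ℂ` (`N ≥ 1`) is everywhere differentiable with `fderiv ℝ u = 0` a.e.,
and `u ∈ L²`, then `u = 0`. -/
lemma eq_zero_of_fderiv_ae_zero {n : ℕ} {u : Ev (n + 1) → ℂ}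
    (hdiff : Differentiable ℝ u) (hL2 : MemLp u 2 (volume : Measure (Ev (n + 1))))
    (hae : ∀ᵐ x : Ev (n + 1) ∂(volume : Measure (Ev (n+1))), fderiv ℝ u x = 0) :
    u = 0 := by
  classical
  -- the measurable equivs
  set F1 : Ev (n+1) ≃ᵐ (Fin (n+1) → ℝ) := (MeasurableEquiv.toLp 2 (Fin (n+1) → ℝ)).symm with hF1
  set F2 : (Fin (n+1) → ℝ) ≃ᵐ ℝ × (Fin n → ℝ) := MeasurableEquiv.piFinSuccAbove (fun _ => ℝ) 0
    with hF2
  -- H : (Fin n → ℝ) × ℝ → Ev (n+1)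
  set H : (Fin n → ℝ) × ℝ → Ev (n+1) := fun q => F1.symm (Fin.cons q.2 q.1) with hH
  have hmp1 : MeasurePreserving (⇑F1.symm) (volume : Measure (Fin (n+1) → ℝ)) volume :=
    (EuclideanSpace.volume_preserving_symm_measurableEquiv_toLp (Fin (n+1))).symm
  have hmp2 : MeasurePreserving (⇑F2.symm)
      (volume : Measure (ℝ × (Fin n → ℝ))) volume :=
    (volume_preserving_piFinSuccAbove (fun _ : Fin (n+1) => ℝ) 0).symm
  have hswap : MeasurePreserving (Prod.swap : (Fin n → ℝ) × ℝ → ℝ × (Fin n → ℝ))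
      ((volume : Measure (Fin n → ℝ)).prod (volume : Measure ℝ))
      ((volume : Measure ℝ).prod (volume : Measure (Fin n → ℝ))) :=
    Measure.measurePreserving_swap
  have hF2symm : ∀ p : ℝ × (Fin n → ℝ), F2.symm p = Fin.cons p.1 p.2 := by
    intro p
    simp [hF2, MeasurableEquiv.piFinSuccAbove, Fin.insertNthEquiv, Fin.insertNth_zero']
  have hHeq : H = (⇑F1.symm) ∘ (⇑F2.symm) ∘ Prod.swap := by
    funext q
    simp [hH, Function.comp, hF2symm]
  have hmpH : MeasurePreserving H
      (((volume : Measure (Fin n → ℝ))).prod (volume : Measure ℝ))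
      (volume : Measure (Ev (n+1))) := by
    rw [hHeq]
    exact (hmp1.comp hmp2).comp hswap
  set dvec : Ev (n+1) := F1.symm (Fin.cons 1 0) with hdvec
  -- affine structure of `H` in the second variable
  have happ : ∀ (v : Fin (n+1) → ℝ) (j : Fin (n+1)), (F1.symm v) j = v j := fun v j => rfl
  have hlin : ∀ (y : Fin n → ℝ) (s : ℝ), H (y, s) = H (y, 0) + s • dvec := by
    intro y s
    ext j
    simp only [hH, hdvec]
    rw [PiLp.add_apply, PiLp.smul_apply, happ, happ, happ, smul_eq_mul]
    refine Fin.cases ?_ (fun k => ?_) j <;> simp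
  -- everywhere differentiability along slices
  have hder : ∀ (y : Fin n → ℝ) (s : ℝ),
      HasDerivAt (fun s => u (H (y, s))) ((fderiv ℝ u (H (y, s))) dvec) s := by
    intro y s
    have hfun : (fun s : ℝ => H (y, s)) = (fun s : ℝ => H (y, 0) + s • dvec) :=
      funext (hlin y)
    have h1 : HasDerivAt (fun s : ℝ => H (y, 0) + s • dvec) dvec s := by
      simpa using (((hasDerivAt_id s).smul_const dvec).const_add (H (y, 0)))
    have h1' : HasDerivAt (fun s : ℝ => H (y, s)) dvec s := by rw [hfun]; exact h1
    exact (hdiff (H (y, s))).hasFDerivAt.comp_hasDerivAt s h1'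
  -- transfer the a.e. vanishing of the derivative
  have hfmeas : MeasurableSet {x : Ev (n+1) | fderiv ℝ u x ≠ 0} :=
    ((measurable_fderiv ℝ u).stronglyMeasurable.measurableSet_eq_fun
      stronglyMeasurable_const).compl
  have haeH : ∀ᵐ q ∂((volume : Measure (Fin n → ℝ)).prod (volume : Measure ℝ)),
      fderiv ℝ u (H q) = 0 := by
    have h0 : (volume : Measure (Ev (n+1))) {x | fderiv ℝ u x ≠ 0} = 0 := by
      have h := hae
      rw [ae_iff] at h
      exact h
    have : ((volume : Measure (Fin n → ℝ)).prod (volume : Measure ℝ))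
        (H ⁻¹' {x | fderiv ℝ u x ≠ 0}) = 0 := by
      rw [hmpH.measure_preimage hfmeas.nullMeasurableSet]; exact h0
    rw [ae_iff]; exact this
  have haeHy : ∀ᵐ y ∂(volume : Measure (Fin n → ℝ)), ∀ᵐ s ∂(volume : Measure ℝ),
      fderiv ℝ u (H (y, s)) = 0 := Measure.ae_ae_of_ae_prod haeH
  -- transfer integrability of ‖u‖²
  have hInt : Integrable (fun x : Ev (n+1) => ‖u x‖ ^ (2:ℝ)) volume := by
    have h := hL2.integrable_norm_rpow two_ne_zero ENNReal.ofNat_ne_top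
    simp only [ENNReal.toReal_ofNat] at h
    exact h
  have hcont2 : Continuous (fun x : Ev (n+1) => ‖u x‖ ^ (2:ℝ)) :=
    Continuous.rpow_const hdiff.continuous.norm (fun x => Or.inr (by norm_num))
  have hsm : AEStronglyMeasurable (fun x : Ev (n+1) => ‖u x‖ ^ (2:ℝ)) volume :=
    hcont2.aestronglyMeasurable
  have hIntH : Integrable ((fun x : Ev (n+1) => ‖u x‖ ^ (2:ℝ)) ∘ H)
      ((volume : Measure (Fin n → ℝ)).prod (volume : Measure ℝ)) :=
    (hmpH.integrable_comp hsm).mpr hInt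
  have hIntSlice : ∀ᵐ y ∂(volume : Measure (Fin n → ℝ)),
      Integrable (fun s : ℝ => ‖u (H (y, s))‖ ^ (2:ℝ)) volume := hIntH.prod_right_ae
  -- a.e. slice: u vanishes identically on the slice
  have hslice : ∀ᵐ y ∂(volume : Measure (Fin n → ℝ)), ∀ s : ℝ, u (H (y, s)) = 0 := by
    filter_upwards [haeHy, hIntSlice] with y h1 h2
    have hconst : ∀ s : ℝ, u (H (y, s)) = u (H (y, 0)) := by
      apply const_of_deriv_ae_zero (g' := fun s => (fderiv ℝ u (H (y, s))) dvec) (hder y)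
      filter_upwards [h1] with s hs
      rw [hs]; rfl
    have h2' : Integrable (fun _ : ℝ => ‖u (H (y, 0))‖ ^ (2:ℝ)) (volume : Measure ℝ) := by
      apply h2.congr
      filter_upwards with s
      rw [hconst s]
    rw [integrable_const_iff] at h2'
    rcases h2' with h | h
    · have hnorm : ‖u (H (y, 0))‖ = 0 := by
        by_contra hne0
        have hpos : 0 < ‖u (H (y, 0))‖ := lt_of_le_of_ne (norm_nonneg _) (Ne.symm hne0)
        exact absurd h (ne_of_gt (Real.rpow_pos_of_pos hpos 2))
      intro s
      rw [hconst s]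
      exact norm_eq_zero.mp hnorm
    · exact absurd h.measure_univ_lt_top (by simp)
  -- conclude u = 0 a.e., hence everywhere
  have humeas : MeasurableSet {x : Ev (n+1) | u x ≠ 0} :=
    (hdiff.continuous.measurable.stronglyMeasurable.measurableSet_eq_fun
      stronglyMeasurable_const).compl
  have hZu : (volume : Measure (Ev (n+1))) {x : Ev (n+1) | u x ≠ 0} = 0 := by
    rw [← hmpH.measure_preimage humeas.nullMeasurableSet]
    have : ∀ᵐ q ∂((volume : Measure (Fin n → ℝ)).prod (volume : Measure ℝ)),
        q ∈ (H ⁻¹' {x : Ev (n+1) | u x ≠ 0})ᶜ := by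
      rw [Measure.ae_prod_mem_iff_ae_ae_mem]
      · filter_upwards [hslice] with y hy
        filter_upwards with s
        simp only [Set.mem_compl_iff, Set.mem_preimage, Set.mem_setOf_eq, not_not]
        exact hy s
      · exact (hmpH.measurable humeas).compl
    rw [ae_iff] at this
    simpa using this
  have huae : u =ᵐ[volume] (fun _ => (0:ℂ)) := by
    rw [Filter.eventuallyEq_iff_exists_mem]
    exact ⟨{x | u x ≠ 0}ᶜ, by rwa [mem_ae_iff, compl_compl], fun x hx => not_not.mp hx⟩
  exact (Continuous.ae_eq_iff_eq volume hdiff.continuous continuous_const).mp huae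

section ScalingAux

variable {N : ℕ} {u : Ev N → ℂ}

lemma gradIntegral_nonneg (u : Ev N → ℂ) : 0 ≤ gradIntegral u :=
  integral_nonneg fun x => by positivity

lemma massIntegral_nonneg (u : Ev N → ℂ) : 0 ≤ massIntegral u :=
  integral_nonneg fun x => by positivity

lemma wIntegral_nonneg (b p : ℝ) (u : Ev N → ℂ) : 0 ≤ wIntegral b p u :=
  integral_nonneg fun x => by positivity

lemma fderiv_scaleFun (hu : Differentiable ℝ u) (t : ℝ) (x : Ev N) :
    fderiv ℝ (scaleFun t u) x
      = ((t ^ ((N : ℝ) / 2) : ℝ) * t) • fderiv ℝ u (t • x) := by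
  have h1 : HasFDerivAt (fun y : Ev N => t • y)
      (t • ContinuousLinearMap.id ℝ (Ev N)) x := (hasFDerivAt_id x).const_smul t
  have h2 : HasFDerivAt (fun y : Ev N => u (t • y))
      ((fderiv ℝ u (t • x)).comp (t • ContinuousLinearMap.id ℝ (Ev N))) x :=
    (hu (t • x)).hasFDerivAt.comp x h1
  have h3 : (fderiv ℝ u (t • x)).comp (t • ContinuousLinearMap.id ℝ (Ev N))
      = t • fderiv ℝ u (t • x) := by
    ext y; simp
  rw [h3] at h2
  have h4 : HasFDerivAt (scaleFun t u)
      (((t ^ ((N : ℝ) / 2) : ℝ)) • (t • fderiv ℝ u (t • x))) x := h2.const_smul (t ^ ((N : ℝ) / 2) : ℝ)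
  rw [h4.fderiv, smul_smul]

lemma rpow_half_sq {t : ℝ} (ht : 0 < t) : (t ^ ((N : ℝ) / 2)) ^ 2 = t ^ (N : ℕ) := by
  rw [← Real.rpow_natCast (t ^ ((N : ℝ) / 2)) 2, ← Real.rpow_mul ht.le]
  norm_num

lemma gradIntegral_scaleFun (hu : Differentiable ℝ u) {t : ℝ} (ht : 0 < t) :
    gradIntegral (scaleFun t u) = t ^ 2 * gradIntegral u := by
  have key : ∀ x : Ev N, ‖fderiv ℝ (scaleFun t u) x‖ ^ 2
      = (t ^ ((N:ℝ)/2) * t) ^ 2 * ‖fderiv ℝ u (t • x)‖ ^ 2 := by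
    intro x
    rw [fderiv_scaleFun hu t x]
    have hns : ‖(t ^ ((N:ℝ)/2) * t) • fderiv ℝ u (t • x)‖
        = |t ^ ((N:ℝ)/2) * t| * ‖fderiv ℝ u (t • x)‖ := by
      rw [← Real.norm_eq_abs]
      exact norm_smul (t ^ ((N:ℝ)/2) * t) (fderiv ℝ u (t • x))
    rw [hns, mul_pow, sq_abs, mul_pow]
  unfold gradIntegral
  simp_rw [key]
  rw [integral_const_mul]
  rw [show (fun x : Ev N => ‖fderiv ℝ u (t • x)‖ ^ 2)
      = fun x => (fun y : Ev N => ‖fderiv ℝ u y‖ ^ 2) (t • x) from rfl]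
  rw [Measure.integral_comp_smul_of_nonneg volume
    (fun y : Ev N => ‖fderiv ℝ u y‖ ^ 2) t (hR := ht.le)]
  rw [smul_eq_mul, finrank_euclideanSpace_fin]
  rw [mul_pow, rpow_half_sq ht]
  have htN : (0:ℝ) < t ^ (N : ℕ) := pow_pos ht N
  field_simp

lemma massIntegral_scaleFun {t : ℝ} (ht : 0 < t) (u : Ev N → ℂ) :
    massIntegral (scaleFun t u) = massIntegral u := by
  have key : ∀ x : Ev N, ‖scaleFun t u x‖ ^ 2
      = (t ^ ((N:ℝ)/2)) ^ 2 * ‖u (t • x)‖ ^ 2 := by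
    intro x
    rw [scaleFun, norm_smul, mul_pow, Real.norm_eq_abs, sq_abs]
  unfold massIntegral
  simp_rw [key]
  rw [integral_const_mul]
  rw [show (fun x : Ev N => ‖u (t • x)‖ ^ 2)
      = fun x => (fun y : Ev N => ‖u y‖ ^ 2) (t • x) from rfl]
  rw [Measure.integral_comp_smul_of_nonneg volume (fun y : Ev N => ‖u y‖ ^ 2) t (hR := ht.le)]
  rw [smul_eq_mul, finrank_euclideanSpace_fin, rpow_half_sq ht]
  have htN : (0:ℝ) < t ^ (N : ℕ) := pow_pos ht N
  field_simp

lemma wIntegral_scaleFun (b p : ℝ) {t : ℝ} (ht : 0 < t) (u : Ev N → ℂ) :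
    wIntegral b p (scaleFun t u)
      = t ^ (((N : ℝ) * (p - 2) + 2 * b) / 2) * wIntegral b p u := by
  have hc : (0:ℝ) < t ^ ((N:ℝ)/2) := Real.rpow_pos_of_pos ht _
  have key : ∀ x : Ev N, ‖x‖ ^ (-b) * ‖scaleFun t u x‖ ^ p
      = (t ^ ((N:ℝ)/2)) ^ p * t ^ b
        * (‖t • x‖ ^ (-b) * ‖u (t • x)‖ ^ p) := by
    intro x
    rw [scaleFun, norm_smul, Real.norm_eq_abs, abs_of_pos hc,
      Real.mul_rpow hc.le (norm_nonneg _)]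
    have hnx : ‖t • x‖ = t * ‖x‖ := by
      rw [norm_smul, Real.norm_eq_abs, abs_of_pos ht]
    rw [hnx, Real.mul_rpow ht.le (norm_nonneg x)]
    have hb : t ^ b * t ^ (-b) = 1 := by
      rw [← Real.rpow_add ht]; simp
    linear_combination (-((t ^ ((N:ℝ)/2)) ^ p * (‖x‖ ^ (-b) * ‖u (t • x)‖ ^ p))) * hb
  unfold wIntegral
  simp_rw [key]
  rw [integral_const_mul]
  rw [show (fun x : Ev N => ‖t • x‖ ^ (-b) * ‖u (t • x)‖ ^ p)
      = fun x => (fun y : Ev N => ‖y‖ ^ (-b) * ‖u y‖ ^ p) (t • x) from rfl]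
  rw [Measure.integral_comp_smul_of_nonneg volume
    (fun y : Ev N => ‖y‖ ^ (-b) * ‖u y‖ ^ p) t (hR := ht.le)]
  rw [smul_eq_mul, finrank_euclideanSpace_fin]
  have hexp : (t ^ ((N:ℝ)/2)) ^ p * t ^ b * ((t ^ (N:ℕ))⁻¹)
      = t ^ (((N : ℝ) * (p - 2) + 2 * b) / 2) := by
    rw [← Real.rpow_natCast t N, ← Real.rpow_mul ht.le, ← Real.rpow_neg ht.le,
      ← Real.rpow_add ht, ← Real.rpow_add ht]
    congr 1
    ring
  rw [← mul_assoc, hexp]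

lemma memH1_scaleFun (hu : MemH1 u) {t : ℝ} (ht : 0 < t) : MemH1 (scaleFun t u) := by
  have hdiffc : Differentiable ℝ (fun y : Ev N => u (t • y)) :=
    hu.diff.comp (differentiable_id.const_smul t)
  have hmap : Measure.map (t • ·) (volume : Measure (Ev N))
      = ENNReal.ofReal |(t ^ Module.finrank ℝ (Ev N))⁻¹| • volume :=
    Measure.map_addHaar_smul volume ht.ne'
  have haemap : AEMeasurable (fun x : Ev N => t • x) volume :=
    (continuous_const_smul t).measurable.aemeasurable
  have hac : (ENNReal.ofReal |(t ^ Module.finrank ℝ (Ev N))⁻¹| • (volume : Measure (Ev N)))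
      ≪ volume := Measure.smul_absolutelyContinuous
  refine ⟨hdiffc.const_smul (t ^ ((N : ℝ) / 2) : ℝ), ?_, ?_⟩
  · have h1 : MemLp u 2 (Measure.map (t • ·) (volume : Measure (Ev N))) := by
      rw [hmap]; exact hu.memL2.smul_measure ENNReal.ofReal_ne_top
    have h2 : MemLp (fun y : Ev N => u (t • y)) 2 (volume : Measure (Ev N)) := by
      have := (memLp_map_measure_iff
        (hu.diff.continuous.aestronglyMeasurable.mono_ac (hmap ▸ hac)) haemap).mp h1
      exact this
    exact h2.const_smul (t ^ ((N : ℝ) / 2) : ℝ)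
  · have h1 : MemLp (fun x => fderiv ℝ u x) 2 (Measure.map (t • ·) (volume : Measure (Ev N))) := by
      rw [hmap]; exact hu.gradL2.smul_measure ENNReal.ofReal_ne_top
    have h2 : MemLp (fun y : Ev N => fderiv ℝ u (t • y)) 2 (volume : Measure (Ev N)) := by
      have := (memLp_map_measure_iff
        (hu.gradL2.aestronglyMeasurable.mono_ac (hmap ▸ hac)) haemap).mp h1
      exact this
    have h3 : (fun x : Ev N => fderiv ℝ (scaleFun t u) x)
        = fun x : Ev N => ((t ^ ((N : ℝ) / 2) : ℝ) * t) • fderiv ℝ u (t • x) :=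
      funext (fderiv_scaleFun hu.diff t)
    rw [h3]
    exact h2.const_smul ((t ^ ((N : ℝ) / 2) : ℝ) * t)

lemma scaleFun_ne_zero (hne : u ≠ 0) {t : ℝ} (ht : 0 < t) : scaleFun t u ≠ 0 := by
  obtain ⟨x, hx⟩ := Function.ne_iff.mp hne
  intro h
  apply hx
  have h0 := congrFun h (t⁻¹ • x)
  simp only [scaleFun, Pi.zero_apply, smul_inv_smul₀ ht.ne'] at h0
  rcases smul_eq_zero.mp h0 with h1 | h2
  · exact absurd h1 (ne_of_gt (Real.rpow_pos_of_pos ht _))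
  · simpa using h2

end ScalingAux


/-- On the Nehari-type constraint `K = 0`, the action is nonnegative. -/
lemma Sfun_nonneg_of_Kzero {N : ℕ} {b₁ b₂ p₁ p₂ ω : ℝ} (hH : HypH N b₁ b₂ p₁ p₂) (hω : 0 < ω)
    (φ : Ev N → ℂ) (hKφ : Kfun b₁ b₂ p₁ p₂ φ = 0) : 0 ≤ Sfun b₁ b₂ p₁ p₂ ω φ := by
  have hp₁ : (0:ℝ) < p₁ := lt_trans two_pos hH.hp₁
  have hp₂ : (0:ℝ) < p₂ := lt_trans two_pos hH.hp₂
  have hα₁ : 2 < ((N:ℝ)*(p₁-2)+2*b₁)/2 := hH.hmass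
  have hα₂ : ((N:ℝ)*(p₁-2)+2*b₁)/2 < ((N:ℝ)*(p₂-2)+2*b₂)/2 := hH.horder
  have hA : 0 ≤ gradIntegral φ := gradIntegral_nonneg φ
  have hM : 0 ≤ massIntegral φ := massIntegral_nonneg φ
  have hC₁ : 0 ≤ wIntegral b₁ p₁ φ := wIntegral_nonneg _ _ φ
  have key : (((N:ℝ)*(p₂-2)+2*b₂)/2) * Sfun b₁ b₂ p₁ p₂ ω φ - Kfun b₁ b₂ p₁ p₂ φ
      = gradIntegral φ * ((((N:ℝ)*(p₂-2)+2*b₂)/2)/2 - 1)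
        + (((N:ℝ)*(p₂-2)+2*b₂)/2) * (ω/2) * massIntegral φ
        + (wIntegral b₁ p₁ φ / p₁) * ((((N:ℝ)*(p₂-2)+2*b₂)/2) - (((N:ℝ)*(p₁-2)+2*b₁)/2)) := by
    simp only [Sfun, Kfun]
    field_simp
    all_goals ring
  rw [hKφ, sub_zero] at key
  have h1 : 0 ≤ gradIntegral φ * ((((N:ℝ)*(p₂-2)+2*b₂)/2)/2 - 1) :=
    mul_nonneg hA (by linarith)
  have h2 : 0 ≤ (((N:ℝ)*(p₂-2)+2*b₂)/2) * (ω/2) * massIntegral φ :=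
    mul_nonneg (mul_nonneg (by linarith) (by linarith)) hM
  have h3 : 0 ≤ (wIntegral b₁ p₁ φ / p₁)
      * ((((N:ℝ)*(p₂-2)+2*b₂)/2) - (((N:ℝ)*(p₁-2)+2*b₁)/2)) :=
    mul_nonneg (div_nonneg hC₁ hp₁.le) (by linarith)
  have : 0 ≤ (((N:ℝ)*(p₂-2)+2*b₂)/2) * Sfun b₁ b₂ p₁ p₂ ω φ := by
    rw [key]; linarith
  exact nonneg_of_mul_nonneg_right this (by linarith)

end AuxLemmas

/-- for `ω > 0` and every `u ∈ H¹\{0}` with `K(u) < 0`, one has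
`K(u) < S_ω(u) - m_ω`. -/
theorem statement_18 {N : ℕ} {b₁ b₂ p₁ p₂ ω : ℝ} (hH : HypH N b₁ b₂ p₁ p₂) (hω : 0 < ω)
    (u : Ev N → ℂ) (hu : MemH1 u) (hne : u ≠ 0) (hK : Kfun b₁ b₂ p₁ p₂ u < 0) :
    Kfun b₁ b₂ p₁ p₂ u < Sfun b₁ b₂ p₁ p₂ ω u - mOmega N b₁ b₂ p₁ p₂ ω := by
  classical
  have hp₁ : (0:ℝ) < p₁ := lt_trans two_pos hH.hp₁
  have hp₂ : (0:ℝ) < p₂ := lt_trans two_pos hH.hp₂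
  have hα₁ : 2 < ((N:ℝ)*(p₁-2)+2*b₁)/2 := hH.hmass
  have hα₂ : ((N:ℝ)*(p₁-2)+2*b₁)/2 < ((N:ℝ)*(p₂-2)+2*b₂)/2 := hH.horder
  have ha0 : 0 ≤ gradIntegral u := gradIntegral_nonneg u
  have hm0 : 0 ≤ massIntegral u := massIntegral_nonneg u
  have hc₁0 : 0 ≤ wIntegral b₁ p₁ u := wIntegral_nonneg _ _ u
  have hc₂0 : 0 ≤ wIntegral b₂ p₂ u := wIntegral_nonneg _ _ u
  have hKu : Kfun b₁ b₂ p₁ p₂ u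
      = gradIntegral u + (((N:ℝ)*(p₁-2)+2*b₁)/2) * (wIntegral b₁ p₁ u / p₁)
        - (((N:ℝ)*(p₂-2)+2*b₂)/2) * (wIntegral b₂ p₂ u / p₂) := by
    simp only [Kfun]
    field_simp
    all_goals ring
  have hSu : Sfun b₁ b₂ p₁ p₂ ω u
      = gradIntegral u / 2 + (ω/2) * massIntegral u
        + wIntegral b₁ p₁ u / p₁ - wIntegral b₂ p₂ u / p₂ := by
    simp only [Sfun]; ring
  -- positivity of the gradient integral
  have ha : 0 < gradIntegral u := by
    rcases ha0.lt_or_eq with h | h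
    · exact h
    · exfalso
      obtain ⟨n, rfl⟩ : ∃ n, N = n + 1 := ⟨N - 1, by have := hH.hN; omega⟩
      have hint : Integrable (fun x : Ev (n+1) => ‖fderiv ℝ u x‖ ^ (2:ℝ)) volume := by
        have h' := hu.gradL2.integrable_norm_rpow two_ne_zero ENNReal.ofNat_ne_top
        simpa only [ENNReal.toReal_ofNat] using h'
      have h0 : ∫ x : Ev (n+1), ‖fderiv ℝ u x‖ ^ (2:ℝ) = 0 := by
        have heq : (fun x : Ev (n+1) => ‖fderiv ℝ u x‖ ^ (2:ℝ))
            = fun x : Ev (n+1) => ‖fderiv ℝ u x‖ ^ (2:ℕ) := by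
          funext x
          rw [show ((2:ℝ)) = ((2:ℕ):ℝ) by norm_num, Real.rpow_natCast]
        rw [heq]
        exact h.symm
      have hae : ∀ᵐ x : Ev (n+1) ∂(volume : Measure (Ev (n+1))), fderiv ℝ u x = 0 := by
        have hz := (integral_eq_zero_iff_of_nonneg
          (fun x => Real.rpow_nonneg (norm_nonneg _) _) hint).mp h0
        filter_upwards [hz] with x hx
        simp only [Pi.zero_apply] at hx
        have hnx : ‖fderiv ℝ u x‖ = 0 := by
          by_contra hne0
          have hpos : 0 < ‖fderiv ℝ u x‖ := lt_of_le_of_ne (norm_nonneg _) (Ne.symm hne0)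
          exact absurd hx (ne_of_gt (Real.rpow_pos_of_pos hpos 2))
        exact norm_eq_zero.mp hnx
      exact hne (eq_zero_of_fderiv_ae_zero hu.diff hu.memL2 hae)
  -- the strict negativity in normalized form
  have hKr : gradIntegral u + (((N:ℝ)*(p₁-2)+2*b₁)/2) * (wIntegral b₁ p₁ u / p₁)
      - (((N:ℝ)*(p₂-2)+2*b₂)/2) * (wIntegral b₂ p₂ u / p₂) < 0 := by
    rw [← hKu]; exact hK
  -- find the zero of K along the scaling
  obtain ⟨l, hl0, hl1, hlzero⟩ := keyIVT ha
    (mul_nonneg (by linarith) (div_nonneg hc₁0 hp₁.le)) hα₁ hα₂ hKr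
  have hl2 : l ^ (2:ℝ) = l ^ (2:ℕ) := by
    rw [show ((2:ℝ)) = ((2:ℕ):ℝ) by norm_num, Real.rpow_natCast]
  rw [hl2] at hlzero
  have hvH1 : MemH1 (scaleFun l u) := memH1_scaleFun hu hl0
  have hvne : scaleFun l u ≠ 0 := scaleFun_ne_zero hne hl0
  have hgv : gradIntegral (scaleFun l u) = l ^ 2 * gradIntegral u :=
    gradIntegral_scaleFun hu.diff hl0
  have hmv : massIntegral (scaleFun l u) = massIntegral u := massIntegral_scaleFun hl0 u
  have hw1v : wIntegral b₁ p₁ (scaleFun l u)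
      = l ^ (((N:ℝ)*(p₁-2)+2*b₁)/2) * wIntegral b₁ p₁ u := wIntegral_scaleFun b₁ p₁ hl0 u
  have hw2v : wIntegral b₂ p₂ (scaleFun l u)
      = l ^ (((N:ℝ)*(p₂-2)+2*b₂)/2) * wIntegral b₂ p₂ u := wIntegral_scaleFun b₂ p₂ hl0 u
  have hKv : Kfun b₁ b₂ p₁ p₂ (scaleFun l u) = 0 := by
    simp only [Kfun]
    rw [hgv, hw1v, hw2v]
    have hre : gradIntegral u * l ^ (2:ℕ)
        + ((N:ℝ)*(p₁-2)+2*b₁)/(2*p₁) * (l ^ (((N:ℝ)*(p₁-2)+2*b₁)/2) * wIntegral b₁ p₁ u)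
        - ((N:ℝ)*(p₂-2)+2*b₂)/(2*p₂) * (l ^ (((N:ℝ)*(p₂-2)+2*b₂)/2) * wIntegral b₂ p₂ u)
        = 0 := by
      have e1 : ((N:ℝ)*(p₁-2)+2*b₁)/(2*p₁) = (((N:ℝ)*(p₁-2)+2*b₁)/2)/p₁ := by
        rw [div_div]
      have e2 : ((N:ℝ)*(p₂-2)+2*b₂)/(2*p₂) = (((N:ℝ)*(p₂-2)+2*b₂)/2)/p₂ := by
        rw [div_div]
      rw [e1, e2]
      linear_combination hlzero
    linarith [hre]
  have hSv : Sfun b₁ b₂ p₁ p₂ ω (scaleFun l u)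
      = l ^ (2:ℕ) * (gradIntegral u / 2) + (ω/2) * massIntegral u
        + l ^ (((N:ℝ)*(p₁-2)+2*b₁)/2) * (wIntegral b₁ p₁ u / p₁)
        - l ^ (((N:ℝ)*(p₂-2)+2*b₂)/2) * (wIntegral b₂ p₂ u / p₂) := by
    simp only [Sfun]
    rw [hgv, hmv, hw1v, hw2v]
    ring
  -- the strict comparison
  have hmain := keyMono ha0 (div_nonneg hc₁0 hp₁.le) hα₁ hα₂ hl0 hl1 hKr
  have hSvlt : Sfun b₁ b₂ p₁ p₂ ω (scaleFun l u)
      < Sfun b₁ b₂ p₁ p₂ ω u - Kfun b₁ b₂ p₁ p₂ u := by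
    rw [hSv, hSu, hKu]
    linarith [hmain]
  -- lower bound for the minimization set and conclusion
  have hbdd : BddBelow {c : ℝ | ∃ φ : Ev N → ℂ, MemH1 φ ∧ φ ≠ 0 ∧ Kfun b₁ b₂ p₁ p₂ φ = 0 ∧
      c = Sfun b₁ b₂ p₁ p₂ ω φ} := by
    refine ⟨0, fun c hc => ?_⟩
    obtain ⟨φ, _, _, hKφ, rfl⟩ := hc
    exact Sfun_nonneg_of_Kzero hH hω φ hKφ
  have hmem : Sfun b₁ b₂ p₁ p₂ ω (scaleFun l u) ∈ {c : ℝ | ∃ φ : Ev N → ℂ,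
      MemH1 φ ∧ φ ≠ 0 ∧ Kfun b₁ b₂ p₁ p₂ φ = 0 ∧ c = Sfun b₁ b₂ p₁ p₂ ω φ} :=
    ⟨scaleFun l u, hvH1, hvne, hKv, rfl⟩
  have hmle : mOmega N b₁ b₂ p₁ p₂ ω ≤ Sfun b₁ b₂ p₁ p₂ ω (scaleFun l u) := by
    rw [mOmega]
    exact csInf_le hbdd hmem
  linarith

end
end

section
/- Assume (H), N ≥ 3 and ω ∈ ℝ. Let u, v : (0,∞) → (0,∞) be positive solutions of the radial ODE (ODE_ω): u'' + ((N−1)/r)u' − ωu + r^{−b₂}u^{p₂−1} − r^{−b₁}u^{p₁−1} = 0, such that lim_{r→0} r u'(r) and lim_{r→0} r v'(r) exist. Then for every r > 0: (d/dr)(v(r)/u(r)) = (1/u(r)²) ∫₀^r (s/r)^{N−1} [ s^{−b₂}(u(s)^{p₂−2} − v(s)^{p₂−2}) − s^{−b₁}(u(s)^{p₁−2} − v(s)^{p₁−2}) ] u(s)v(s) ds. -/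
open MeasureTheory Real Filter Topology Set
open scoped ENNReal

noncomputable section

variable {N : ℕ}

private lemma aux_rpow_bound {f : ℝ → ℝ}
    (hpos : ∀ r ∈ Set.Ioi (0:ℝ), 0 < f r)
    (hdiff : ∀ r ∈ Set.Ioi (0:ℝ), DifferentiableAt ℝ f r)
    (hdc : ∀ r ∈ Set.Ioi (0:ℝ), ContinuousAt (deriv f) r)
    (hlim : ∃ L : ℝ, Tendsto (fun r => r * deriv f r) (𝓝[>] (0:ℝ)) (𝓝 L))
    {α : ℝ} (hα : 0 < α) :
    ∃ C : ℝ, 0 < C ∧ ∃ δ : ℝ, 0 < δ ∧ δ ≤ 1 ∧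
      ∀ s ∈ Set.Ioc (0:ℝ) δ, f s ≤ C * s ^ (-α) := by
  obtain ⟨L, hL⟩ := hlim
  have h1 : ∀ᶠ s in 𝓝[>] (0:ℝ), |s * deriv f s - L| < 1 := by
    have := Metric.tendsto_nhds.mp hL 1 one_pos
    simpa [Real.dist_eq] using this
  obtain ⟨δ₀, hδ₀pos, hsub⟩ := mem_nhdsGT_iff_exists_Ioc_subset.mp h1
  set M := |L| + 1 with hM
  have hMpos : (0:ℝ) < M := by positivity
  set δ := min δ₀ 1 with hδdef
  have hδpos : 0 < δ := lt_min hδ₀pos one_pos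
  have hδ1 : δ ≤ 1 := min_le_right _ _
  have hfδ : 0 < f δ := hpos δ hδpos
  have key : ∀ s ∈ Set.Ioc (0:ℝ) δ, f s ≤ f δ + M * (Real.log δ - Real.log s) := by
    intro s hs
    obtain ⟨hs0, hsδ⟩ := hs
    have hbound : ∀ t ∈ Set.Icc s δ, |deriv f t| ≤ M * t⁻¹ := by
      intro t ht
      have ht0 : 0 < t := lt_of_lt_of_le hs0 ht.1
      have htm : t ∈ Set.Ioc (0:ℝ) δ₀ := ⟨ht0, le_trans ht.2 (min_le_left _ _)⟩
      have h2 := hsub htm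
      simp only [Set.mem_setOf_eq] at h2
      have h3 : |t * deriv f t| ≤ M := by
        have : |t * deriv f t| ≤ |t * deriv f t - L| + |L| := by
          calc |t * deriv f t| = |(t * deriv f t - L) + L| := by ring_nf
          _ ≤ |t * deriv f t - L| + |L| := abs_add_le _ _
        linarith
      have h4 : t * |deriv f t| ≤ M := by rwa [abs_mul, abs_of_pos ht0] at h3
      have h5 : |deriv f t| ≤ M / t := by
        rw [le_div_iff₀ ht0]
        calc |deriv f t| * t = t * |deriv f t| := by ring
        _ ≤ M := h4
      calc |deriv f t| ≤ M / t := h5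
      _ = M * t⁻¹ := by ring
    have hcontd : ContinuousOn (deriv f) (Set.Icc s δ) := fun t ht =>
      (hdc t (lt_of_lt_of_le hs0 ht.1)).continuousWithinAt
    have hFTC : ∫ t in s..δ, deriv f t = f δ - f s := by
      apply intervalIntegral.integral_deriv_eq_sub
      · intro t ht
        rw [Set.uIcc_of_le hsδ] at ht
        exact hdiff t (lt_of_lt_of_le hs0 ht.1)
      · exact (hcontd.mono (by rw [Set.uIcc_of_le hsδ])).intervalIntegrable
    have hii1 : IntervalIntegrable (deriv f) volume s δ :=
      (hcontd.mono (by rw [Set.uIcc_of_le hsδ])).intervalIntegrable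
    have hii2 : IntervalIntegrable (fun t => -(M * t⁻¹)) volume s δ := by
      apply ContinuousOn.intervalIntegrable
      intro t ht
      rw [Set.uIcc_of_le hsδ] at ht
      have ht0 : 0 < t := lt_of_lt_of_le hs0 ht.1
      exact ((continuousAt_const.mul (continuousAt_inv₀ ht0.ne')).neg).continuousWithinAt
    have hmono : ∫ t in s..δ, -(M * t⁻¹) ≤ ∫ t in s..δ, deriv f t := by
      apply intervalIntegral.integral_mono_on hsδ hii2 hii1
      intro t ht
      have := hbound t ht
      have := neg_abs_le (deriv f t)
      linarith
    have hinv : ∫ t in s..δ, t⁻¹ = Real.log (δ / s) := integral_inv_of_pos hs0 hδpos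
    have hcalc : ∫ t in s..δ, -(M * t⁻¹) = -(M * (Real.log δ - Real.log s)) := by
      rw [intervalIntegral.integral_neg, intervalIntegral.integral_const_mul, hinv,
        Real.log_div hδpos.ne' hs0.ne']
    rw [hcalc, hFTC] at hmono
    linarith
  refine ⟨f δ + M / α, by positivity, δ, hδpos, hδ1, ?_⟩
  intro s hs
  have hs0 : 0 < s := hs.1
  have hs1 : s ≤ 1 := le_trans hs.2 hδ1
  have h5 := key s hs
  have hlogδ : Real.log δ ≤ 0 := Real.log_nonpos hδpos.le hδ1
  have hrp : (0:ℝ) < s ^ (-α) := Real.rpow_pos_of_pos hs0 _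
  have hrp1 : (1:ℝ) ≤ s ^ (-α) :=
    Real.one_le_rpow_of_pos_of_le_one_of_nonpos hs0 hs1 (by linarith)
  have hlog : -Real.log s ≤ s ^ (-α) / α := by
    have h6 : Real.log (s ^ (-α)) ≤ s ^ (-α) - 1 := Real.log_le_sub_one_of_pos hrp
    rw [Real.log_rpow hs0] at h6
    rw [le_div_iff₀ hα]
    nlinarith
  calc f s ≤ f δ + M * (Real.log δ - Real.log s) := h5
  _ ≤ f δ + M * (-Real.log s) := by nlinarith
  _ ≤ f δ * s ^ (-α) + (M / α) * s ^ (-α) := by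
      have : M * (-Real.log s) ≤ M * (s ^ (-α) / α) := by nlinarith
      have h7 : f δ ≤ f δ * s ^ (-α) := by nlinarith
      calc f δ + M * (-Real.log s) ≤ f δ * s ^ (-α) + M * (s ^ (-α) / α) := by linarith
      _ = f δ * s ^ (-α) + (M / α) * s ^ (-α) := by ring
  _ = (f δ + M / α) * s ^ (-α) := by ring

private lemma aux_term {s C α β q f g h : ℝ} (hs : 0 < s) (hs1 : s ≤ 1)
    (hC : 0 < C) (hf : 0 < f) (hg : 0 < g) (hh : 0 < h)
    (hf' : f ≤ C * s ^ (-α)) (hg' : g ≤ C * s ^ (-α)) (hh' : h ≤ C * s ^ (-α))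
    (hq : 2 ≤ q) (hβ : 0 ≤ β - q * α) :
    s ^ β * (f ^ (q - 2) * (g * h)) ≤ C ^ q := by
  have hrp : (0:ℝ) < s ^ (-α) := Real.rpow_pos_of_pos hs _
  have h2 : (C * s ^ (-α)) ^ (q - 2) = C ^ (q-2) * s ^ (-α * (q-2)) := by
    rw [Real.mul_rpow hC.le hrp.le, ← Real.rpow_mul hs.le]
  have step1 : s ^ β * (f ^ (q - 2) * (g * h)) ≤
      s ^ β * ((C * s ^ (-α)) ^ (q-2) * ((C * s ^ (-α)) * (C * s ^ (-α)))) := by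
    gcongr s ^ β * (?_ * (?_ * ?_)) <;>
      first
      | exact Real.rpow_nonneg hs.le _
      | exact Real.rpow_le_rpow hf.le hf' (by linarith)
      | exact hg'
      | exact hh'
      | exact hg.le
      | exact hh.le
      | positivity
      | linarith
  have hC3 : C ^ (q-2) * (C * C) = C ^ q := by
    have : C ^ (q-2) * (C ^ (1:ℝ) * C ^ (1:ℝ)) = C ^ q := by
      rw [← Real.rpow_add hC, ← Real.rpow_add hC]
      congr 1; ring
    simpa [Real.rpow_one] using this
  have hs3 : s ^ β * (s ^ (-α*(q-2)) * (s ^ (-α) * s ^ (-α))) = s ^ (β - q * α) := by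
    rw [← Real.rpow_add hs, ← Real.rpow_add hs, ← Real.rpow_add hs]
    congr 1; ring
  calc s ^ β * (f ^ (q - 2) * (g * h)) ≤
      s ^ β * ((C * s ^ (-α)) ^ (q-2) * ((C * s ^ (-α)) * (C * s ^ (-α)))) := step1
  _ = (C ^ (q-2) * (C * C)) * (s ^ β * (s ^ (-α*(q-2)) * (s ^ (-α) * s ^ (-α)))) := by
      rw [h2]; ring
  _ = C ^ q * s ^ (β - q * α) := by rw [hC3, hs3]
  _ ≤ C ^ q * 1 := by
      have := Real.rpow_le_one hs.le hs1 hβ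
      have hCq : (0:ℝ) ≤ C ^ q := (Real.rpow_pos_of_pos hC _).le
      nlinarith
  _ = C ^ q := mul_one _

set_option maxHeartbeats 2000000 in
/-- the Wronskian-type identity for two positive solutions of the radial
ODE `u'' + ((N-1)/r)u' - ωu + r^{-b₂}u^{p₂-1} - r^{-b₁}u^{p₁-1} = 0` such that
`lim_{r→0} r u'(r)` and `lim_{r→0} r v'(r)` exist. -/
theorem statement_19 {N : ℕ} {b₁ b₂ p₁ p₂ ω : ℝ} (hH : HypH N b₁ b₂ p₁ p₂) (hN : 3 ≤ N)
    (u v : ℝ → ℝ)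
    (hupos : ∀ r ∈ Set.Ioi (0 : ℝ), 0 < u r) (hvpos : ∀ r ∈ Set.Ioi (0 : ℝ), 0 < v r)
    (hu1 : ∀ r ∈ Set.Ioi (0 : ℝ), DifferentiableAt ℝ u r)
    (hu2 : ∀ r ∈ Set.Ioi (0 : ℝ), DifferentiableAt ℝ (deriv u) r)
    (hv1 : ∀ r ∈ Set.Ioi (0 : ℝ), DifferentiableAt ℝ v r)
    (hv2 : ∀ r ∈ Set.Ioi (0 : ℝ), DifferentiableAt ℝ (deriv v) r)
    (hueq : ∀ r ∈ Set.Ioi (0 : ℝ),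
      deriv (deriv u) r + (((N : ℝ) - 1) / r) * deriv u r - ω * u r
        + r ^ (-b₂) * u r ^ (p₂ - 1) - r ^ (-b₁) * u r ^ (p₁ - 1) = 0)
    (hveq : ∀ r ∈ Set.Ioi (0 : ℝ),
      deriv (deriv v) r + (((N : ℝ) - 1) / r) * deriv v r - ω * v r
        + r ^ (-b₂) * v r ^ (p₂ - 1) - r ^ (-b₁) * v r ^ (p₁ - 1) = 0)
    (hulim : ∃ L : ℝ, Tendsto (fun r => r * deriv u r) (𝓝[>] (0 : ℝ)) (𝓝 L))
    (hvlim : ∃ L : ℝ, Tendsto (fun r => r * deriv v r) (𝓝[>] (0 : ℝ)) (𝓝 L)) :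
    ∀ r ∈ Set.Ioi (0 : ℝ),
      deriv (fun s => v s / u s) r
        = (1 / u r ^ 2) * ∫ s in Set.Ioc (0 : ℝ) r, (s / r) ^ ((N : ℝ) - 1) *
            ((s ^ (-b₂) * (u s ^ (p₂ - 2) - v s ^ (p₂ - 2))
              - s ^ (-b₁) * (u s ^ (p₁ - 2) - v s ^ (p₁ - 2))) * (u s * v s)) := by
  have hN3 : (3:ℝ) ≤ (N:ℝ) := by exact_mod_cast hN
  set a : ℝ := (N:ℝ) - 1 with ha
  have ha2 : (2:ℝ) ≤ a := by rw [ha]; linarith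
  have hb₁2 : b₁ < 2 := lt_of_lt_of_le hH.hb₁' (min_le_left _ _)
  have hb₂2 : b₂ < 2 := lt_of_lt_of_le hH.hb₂' (min_le_left _ _)
  have hp₁ := hH.hp₁
  have hp₂ := hH.hp₂
  have hb₁0 := hH.hb₁
  have hb₂0 := hH.hb₂
  -- the integrand pieces
  set h : ℝ → ℝ := fun s =>
    (s ^ (-b₂) * (u s ^ (p₂ - 2) - v s ^ (p₂ - 2))
      - s ^ (-b₁) * (u s ^ (p₁ - 2) - v s ^ (p₁ - 2))) * (u s * v s) with hhdef
  set g : ℝ → ℝ := fun s => s ^ a * h s with hgdef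
  set W : ℝ → ℝ := fun s => s ^ a * (deriv v s * u s - deriv u s * v s) with hWdef
  -- the exponent α
  set α : ℝ := min ((a - b₁)/p₁) ((a - b₂)/p₂) with hαdef
  have hα : 0 < α := by
    apply lt_min <;> apply div_pos <;> linarith
  have hα1 : p₁ * α ≤ a - b₁ := by
    have := min_le_left ((a - b₁)/p₁) ((a - b₂)/p₂)
    rw [hαdef]
    calc p₁ * (min ((a - b₁)/p₁) ((a - b₂)/p₂)) ≤ p₁ * ((a - b₁)/p₁) := by nlinarith
    _ = a - b₁ := by field_simp
  have hα2 : p₂ * α ≤ a - b₂ := by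
    have := min_le_right ((a - b₁)/p₁) ((a - b₂)/p₂)
    rw [hαdef]
    calc p₂ * (min ((a - b₁)/p₁) ((a - b₂)/p₂)) ≤ p₂ * ((a - b₂)/p₂) := by nlinarith
    _ = a - b₂ := by field_simp
  have hαa : α < a - 1 := by
    have h1 : (a - b₂)/p₂ < a - 1 := by
      rw [div_lt_iff₀ (by linarith : (0:ℝ) < p₂)]
      nlinarith
    calc α ≤ (a - b₂)/p₂ := min_le_right _ _
    _ < a - 1 := h1
  -- bounds for u and v near 0
  obtain ⟨Cu, hCu, δu, hδu, hδu1, hubd⟩ :=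
    aux_rpow_bound hupos hu1 (fun r hr => (hu2 r hr).continuousAt) hulim hα
  obtain ⟨Cv, hCv, δv, hδv, hδv1, hvbd⟩ :=
    aux_rpow_bound hvpos hv1 (fun r hr => (hv2 r hr).continuousAt) hvlim hα
  set C : ℝ := max Cu Cv with hCdef
  have hC : 0 < C := lt_of_lt_of_le hCu (le_max_left _ _)
  set δ : ℝ := min δu δv with hδdef
  have hδ : 0 < δ := lt_min hδu hδv
  have hδ1 : δ ≤ 1 := le_trans (min_le_left _ _) hδu1
  have hubd' : ∀ s ∈ Set.Ioc (0:ℝ) δ, u s ≤ C * s ^ (-α) := by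
    intro s hs
    have h1 := hubd s ⟨hs.1, le_trans hs.2 (min_le_left _ _)⟩
    have h2 : (0:ℝ) ≤ s ^ (-α) := Real.rpow_nonneg hs.1.le _
    calc u s ≤ Cu * s ^ (-α) := h1
    _ ≤ C * s ^ (-α) := by nlinarith [le_max_left Cu Cv]
  have hvbd' : ∀ s ∈ Set.Ioc (0:ℝ) δ, v s ≤ C * s ^ (-α) := by
    intro s hs
    have h1 := hvbd s ⟨hs.1, le_trans hs.2 (min_le_right _ _)⟩
    have h2 : (0:ℝ) ≤ s ^ (-α) := Real.rpow_nonneg hs.1.le _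
    calc v s ≤ Cv * s ^ (-α) := h1
    _ ≤ C * s ^ (-α) := by nlinarith [le_max_right Cu Cv]
  -- Step 1: derivative of W
  have hWderiv : ∀ s ∈ Set.Ioi (0:ℝ), HasDerivAt W (g s) s := by
    intro s hs
    have hs0 : (0:ℝ) < s := hs
    have hU : 0 < u s := hupos s hs
    have hV : 0 < v s := hvpos s hs
    have hdu := (hu1 s hs).hasDerivAt
    have hdv := (hv1 s hs).hasDerivAt
    have hddu := (hu2 s hs).hasDerivAt
    have hddv := (hv2 s hs).hasDerivAt
    have hA : HasDerivAt (fun t => deriv v t * u t - deriv u t * v t)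
        (deriv (deriv v) s * u s - deriv (deriv u) s * v s) s := by
      have h1 := (hddv.mul hdu).sub (hddu.mul hdv)
      exact h1.congr_deriv (by ring)
    have hpow : HasDerivAt (fun t : ℝ => t ^ a) (a * s ^ (a - 1)) s :=
      Real.hasDerivAt_rpow_const (Or.inl hs0.ne')
    have hW' := hpow.mul hA
    have keyeq : g s = a * s ^ (a - 1) * (deriv v s * u s - deriv u s * v s)
        + s ^ a * (deriv (deriv v) s * u s - deriv (deriv u) s * v s) := by
      have hueqs := hueq s hs
      have hveqs := hveq s hs
      -- a already substituted by set
      have hU2 : deriv (deriv u) s = ω * u s - s ^ (-b₂) * u s ^ (p₂-1)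
          + s ^ (-b₁) * u s ^ (p₁-1) - (a/s) * deriv u s := by linarith
      have hV2 : deriv (deriv v) s = ω * v s - s ^ (-b₂) * v s ^ (p₂-1)
          + s ^ (-b₁) * v s ^ (p₁-1) - (a/s) * deriv v s := by linarith
      have e2 : u s ^ (p₂-1) = u s ^ (p₂-2) * u s := by
        rw [← Real.rpow_add_one hU.ne' (p₂-2)]; congr 1; ring
      have e3 : v s ^ (p₂-1) = v s ^ (p₂-2) * v s := by
        rw [← Real.rpow_add_one hV.ne' (p₂-2)]; congr 1; ring
      have e4 : u s ^ (p₁-1) = u s ^ (p₁-2) * u s := by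
        rw [← Real.rpow_add_one hU.ne' (p₁-2)]; congr 1; ring
      have e5 : v s ^ (p₁-1) = v s ^ (p₁-2) * v s := by
        rw [← Real.rpow_add_one hV.ne' (p₁-2)]; congr 1; ring
      have e1 : a * s ^ (a-1) = s ^ a * (a / s) := by
        rw [show s ^ a = s ^ (a-1) * s from by
          rw [← Real.rpow_add_one hs0.ne' (a-1)]; congr 1; ring]
        field_simp
      rw [hgdef, hhdef, hU2, hV2, e2, e3, e4, e5, e1]
      ring
    rw [keyeq]
    exact hW'
  -- Step 2: limit of W at 0
  have hrpow0 : ∀ c : ℝ, 0 < c → Tendsto (fun s : ℝ => s ^ c) (𝓝[>] (0:ℝ)) (𝓝 0) := by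
    intro c hc
    have h1 : Tendsto (fun s : ℝ => s ^ c) (𝓝[>] (0:ℝ)) (𝓝 ((0:ℝ) ^ c)) :=
      (Real.continuousAt_rpow_const 0 c (Or.inr hc.le)).continuousWithinAt
    have h2 : (0:ℝ) ^ c = 0 := Real.zero_rpow hc.ne'
    rwa [h2] at h1
  have hIocmem : Set.Ioc (0:ℝ) δ ∈ 𝓝[>] (0:ℝ) :=
    Ioc_mem_nhdsGT_of_mem ⟨le_refl 0, hδ⟩
  have hsu : Tendsto (fun s => s ^ (a-1) * u s) (𝓝[>] (0:ℝ)) (𝓝 0) := by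
    apply squeeze_zero_norm' (a := fun s => C * s ^ (a - 1 - α))
    · filter_upwards [hIocmem] with s hs
      have hs0 : 0 < s := hs.1
      have hU : 0 < u s := hupos s hs.1
      have h1 : s ^ (a-1) * u s ≤ s ^ (a-1) * (C * s ^ (-α)) := by
        have := hubd' s hs
        nlinarith [Real.rpow_pos_of_pos hs0 (a-1)]
      have h2 : s ^ (a-1) * (C * s ^ (-α)) = C * s ^ (a - 1 - α) := by
        rw [show a - 1 - α = (a-1) + (-α) from by ring, Real.rpow_add hs0]
        ring
      rw [Real.norm_eq_abs, abs_of_pos (by positivity : (0:ℝ) < s ^ (a-1) * u s)]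
      linarith
    · have := (hrpow0 (a - 1 - α) (by linarith)).const_mul C
      simpa only [mul_zero] using this
  have hsv : Tendsto (fun s => s ^ (a-1) * v s) (𝓝[>] (0:ℝ)) (𝓝 0) := by
    apply squeeze_zero_norm' (a := fun s => C * s ^ (a - 1 - α))
    · filter_upwards [hIocmem] with s hs
      have hs0 : 0 < s := hs.1
      have hV : 0 < v s := hvpos s hs.1
      have h1 : s ^ (a-1) * v s ≤ s ^ (a-1) * (C * s ^ (-α)) := by
        have := hvbd' s hs
        nlinarith [Real.rpow_pos_of_pos hs0 (a-1)]
      have h2 : s ^ (a-1) * (C * s ^ (-α)) = C * s ^ (a - 1 - α) := by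
        rw [show a - 1 - α = (a-1) + (-α) from by ring, Real.rpow_add hs0]
        ring
      rw [Real.norm_eq_abs, abs_of_pos (by positivity : (0:ℝ) < s ^ (a-1) * v s)]
      linarith
    · have := (hrpow0 (a - 1 - α) (by linarith)).const_mul C
      simpa only [mul_zero] using this
  obtain ⟨Lu, hLu⟩ := hulim
  obtain ⟨Lv, hLv⟩ := hvlim
  have hWlim : Tendsto W (𝓝[>] (0:ℝ)) (𝓝 0) := by
    have h1 : Tendsto (fun s => (s ^ (a-1) * u s) * (s * deriv v s)
        - (s ^ (a-1) * v s) * (s * deriv u s)) (𝓝[>] (0:ℝ)) (𝓝 (0 * Lv - 0 * Lu)) :=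
      (hsu.mul hLv).sub (hsv.mul hLu)
    rw [show (0:ℝ) * Lv - 0 * Lu = 0 from by ring] at h1
    apply h1.congr'
    filter_upwards [self_mem_nhdsWithin] with s hs
    have hs0 : (0:ℝ) < s := hs
    have e1 : s ^ (a-1) * s = s ^ a := by
      rw [← Real.rpow_add_one hs0.ne' (a-1)]; congr 1; ring
    rw [hWdef]
    simp only
    linear_combination (deriv v s * u s - deriv u s * v s) * e1
  -- Step 3: bound on g near 0
  have hgbd : ∀ s ∈ Set.Ioc (0:ℝ) δ, |g s| ≤ 2 * C ^ p₁ + 2 * C ^ p₂ := by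
    intro s hs
    have hs0 : 0 < s := hs.1
    have hs1 : s ≤ 1 := le_trans hs.2 hδ1
    have hU : 0 < u s := hupos s hs.1
    have hV : 0 < v s := hvpos s hs.1
    have hbu := hubd' s hs
    have hbv := hvbd' s hs
    have eb2 : s ^ a * s ^ (-b₂) = s ^ (a - b₂) := by
      rw [← Real.rpow_add hs0]; congr 1
    have eb1 : s ^ a * s ^ (-b₁) = s ^ (a - b₁) := by
      rw [← Real.rpow_add hs0]; congr 1
    set T1 := s ^ (a - b₂) * (u s ^ (p₂-2) * (u s * v s)) with hT1
    set T2 := s ^ (a - b₂) * (v s ^ (p₂-2) * (u s * v s)) with hT2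
    set T3 := s ^ (a - b₁) * (u s ^ (p₁-2) * (u s * v s)) with hT3
    set T4 := s ^ (a - b₁) * (v s ^ (p₁-2) * (u s * v s)) with hT4
    have hgsplit : g s = T1 - T2 - T3 + T4 := by
      show s ^ a * ((s ^ (-b₂) * (u s ^ (p₂ - 2) - v s ^ (p₂ - 2))
        - s ^ (-b₁) * (u s ^ (p₁ - 2) - v s ^ (p₁ - 2))) * (u s * v s)) = T1 - T2 - T3 + T4
      rw [hT1, hT2, hT3, hT4, ← eb1, ← eb2]; ring
    have hT1n : 0 ≤ T1 := mul_nonneg (Real.rpow_nonneg hs0.le _)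
      (mul_nonneg (Real.rpow_nonneg hU.le _) (mul_nonneg hU.le hV.le))
    have hT2n : 0 ≤ T2 := mul_nonneg (Real.rpow_nonneg hs0.le _)
      (mul_nonneg (Real.rpow_nonneg hV.le _) (mul_nonneg hU.le hV.le))
    have hT3n : 0 ≤ T3 := mul_nonneg (Real.rpow_nonneg hs0.le _)
      (mul_nonneg (Real.rpow_nonneg hU.le _) (mul_nonneg hU.le hV.le))
    have hT4n : 0 ≤ T4 := mul_nonneg (Real.rpow_nonneg hs0.le _)
      (mul_nonneg (Real.rpow_nonneg hV.le _) (mul_nonneg hU.le hV.le))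
    have habs : |g s| ≤ T1 + T2 + T3 + T4 := by
      rw [hgsplit]
      have h1 : |T1 - T2 - T3 + T4| ≤ |T1 - T2 - T3| + |T4| := abs_add_le _ _
      have h2 : |T1 - T2 - T3| ≤ |T1 - T2| + |T3| := abs_sub _ _
      have h3 : |T1 - T2| ≤ |T1| + |T2| := abs_sub _ _
      rw [abs_of_nonneg hT1n, abs_of_nonneg hT2n, abs_of_nonneg hT3n, abs_of_nonneg hT4n] at *
      linarith
    have hbT1 : T1 ≤ C ^ p₂ := by
      rw [hT1]; exact aux_term hs0 hs1 hC hU hU hV hbu hbu hbv hp₂.le (by linarith)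
    have hbT2 : T2 ≤ C ^ p₂ := by
      rw [hT2]; exact aux_term hs0 hs1 hC hV hU hV hbv hbu hbv hp₂.le (by linarith)
    have hbT3 : T3 ≤ C ^ p₁ := by
      rw [hT3]; exact aux_term hs0 hs1 hC hU hU hV hbu hbu hbv hp₁.le (by linarith)
    have hbT4 : T4 ≤ C ^ p₁ := by
      rw [hT4]; exact aux_term hs0 hs1 hC hV hU hV hbv hbu hbv hp₁.le (by linarith)
    linarith
  -- Step 4: continuity of g
  have hgcont : ∀ s ∈ Set.Ioi (0:ℝ), ContinuousAt g s := by
    intro s hs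
    have hs0 : (0:ℝ) < s := hs
    have hU : 0 < u s := hupos s hs
    have hV : 0 < v s := hvpos s hs
    have hcu : ContinuousAt u s := (hu1 s hs).continuousAt
    have hcv : ContinuousAt v s := (hv1 s hs).continuousAt
    have c1 : ContinuousAt (fun t : ℝ => t ^ a) s :=
      Real.continuousAt_rpow_const s a (Or.inl hs0.ne')
    have c2 : ContinuousAt (fun t : ℝ => t ^ (-b₂)) s :=
      Real.continuousAt_rpow_const s _ (Or.inl hs0.ne')
    have c3 : ContinuousAt (fun t : ℝ => t ^ (-b₁)) s :=
      Real.continuousAt_rpow_const s _ (Or.inl hs0.ne')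
    have c4 : ContinuousAt (fun t => u t ^ (p₂-2)) s := hcu.rpow_const (Or.inl hU.ne')
    have c5 : ContinuousAt (fun t => v t ^ (p₂-2)) s := hcv.rpow_const (Or.inl hV.ne')
    have c6 : ContinuousAt (fun t => u t ^ (p₁-2)) s := hcu.rpow_const (Or.inl hU.ne')
    have c7 : ContinuousAt (fun t => v t ^ (p₁-2)) s := hcv.rpow_const (Or.inl hV.ne')
    exact c1.mul (((c2.mul (c4.sub c5)).sub (c3.mul (c6.sub c7))).mul (hcu.mul hcv))
  -- main conclusion
  intro r hr
  have hr0 : (0:ℝ) < r := hr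
  set δ' : ℝ := min δ r with hδ'def
  have hδ'0 : 0 < δ' := lt_min hδ hr0
  have hδ'r : δ' ≤ r := min_le_right _ _
  have hδ'δ : δ' ≤ δ := min_le_left _ _
  -- integrability of g on (0, r]
  have hint1 : IntegrableOn g (Set.Ioc (0:ℝ) δ') volume := by
    have hcontOn : ContinuousOn g (Set.Ioc (0:ℝ) δ') :=
      fun t ht => (hgcont t ht.1).continuousWithinAt
    apply MeasureTheory.Integrable.mono' (g := fun _ => 2 * C ^ p₁ + 2 * C ^ p₂)
    · exact integrableOn_const (by rw [Real.volume_Ioc]; exact ENNReal.ofReal_ne_top)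
    · exact hcontOn.aestronglyMeasurable measurableSet_Ioc
    · refine (ae_restrict_iff' measurableSet_Ioc).mpr (ae_of_all _ fun t ht => ?_)
      rw [Real.norm_eq_abs]
      exact hgbd t ⟨ht.1, le_trans ht.2 hδ'δ⟩
  have hint2 : IntegrableOn g (Set.Icc δ' r) volume :=
    ContinuousOn.integrableOn_Icc
      (fun t ht => (hgcont t (lt_of_lt_of_le hδ'0 ht.1)).continuousWithinAt)
  have hgint : IntegrableOn g (Set.Ioc (0:ℝ) r) volume := by
    apply (hint1.union hint2).mono_set
    intro t ht
    rcases le_or_gt t δ' with hcase | hcase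
    · exact Set.mem_union_left _ ⟨ht.1, hcase⟩
    · exact Set.mem_union_right _ ⟨hcase.le, ht.2⟩
  -- FTC on [ε, r]
  have hFTC : ∀ ε ∈ Set.Ioc (0:ℝ) r, ∫ s in Set.Ioc ε r, g s = W r - W ε := by
    intro ε hε
    rw [← intervalIntegral.integral_of_le hε.2]
    apply intervalIntegral.integral_eq_sub_of_hasDerivAt
    · intro t ht
      rw [Set.uIcc_of_le hε.2] at ht
      exact hWderiv t (lt_of_lt_of_le hε.1 ht.1)
    · apply ContinuousOn.intervalIntegrable
      intro t ht
      rw [Set.uIcc_of_le hε.2] at ht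
      exact (hgcont t (lt_of_lt_of_le hε.1 ht.1)).continuousWithinAt
  -- the integral over (0, ε] tends to 0
  have hsmall : Tendsto (fun ε => ∫ s in Set.Ioc (0:ℝ) ε, g s) (𝓝[>] (0:ℝ)) (𝓝 0) := by
    apply squeeze_zero_norm' (a := fun ε => (2 * C ^ p₁ + 2 * C ^ p₂) * ε)
    · filter_upwards [Ioc_mem_nhdsGT_of_mem ⟨le_refl (0:ℝ), hδ⟩] with ε hε
      have hε0 : 0 < ε := hε.1
      have hb : ∀ x ∈ Set.Ioc (0:ℝ) ε, ‖g x‖ ≤ 2 * C ^ p₁ + 2 * C ^ p₂ := fun x hx => by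
        rw [Real.norm_eq_abs]; exact hgbd x ⟨hx.1, le_trans hx.2 hε.2⟩
      have hmeas : AEStronglyMeasurable g (volume.restrict (Set.Ioc (0:ℝ) ε)) :=
        ContinuousOn.aestronglyMeasurable
          (fun t ht => (hgcont t ht.1).continuousWithinAt) measurableSet_Ioc
      have hfin : volume (Set.Ioc (0:ℝ) ε) < ⊤ := by
        rw [Real.volume_Ioc]; exact ENNReal.ofReal_lt_top
      have h1 := norm_setIntegral_le_of_norm_le_const hfin hb
      calc ‖∫ s in Set.Ioc (0:ℝ) ε, g s‖
          ≤ (2 * C ^ p₁ + 2 * C ^ p₂) * (volume (Set.Ioc (0:ℝ) ε)).toReal := h1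
      _ = (2 * C ^ p₁ + 2 * C ^ p₂) * ε := by
          rw [Real.volume_Ioc, ENNReal.toReal_ofReal (by linarith)]; ring_nf
    · have h2 : Tendsto (fun ε : ℝ => (2 * C ^ p₁ + 2 * C ^ p₂) * ε) (𝓝 0)
          (𝓝 ((2 * C ^ p₁ + 2 * C ^ p₂) * 0)) :=
        (continuous_const.mul continuous_id).tendsto 0
      rw [mul_zero] at h2
      exact tendsto_nhdsWithin_of_tendsto_nhds h2
  -- identify W r with the integral
  have hIeq : W r = ∫ s in Set.Ioc (0:ℝ) r, g s := by
    have t1 : Tendsto (fun ε => W r - W ε) (𝓝[>] (0:ℝ)) (𝓝 (W r - 0)) :=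
      tendsto_const_nhds.sub hWlim
    have t2 : Tendsto (fun ε => (∫ s in Set.Ioc (0:ℝ) r, g s) - ∫ s in Set.Ioc (0:ℝ) ε, g s)
        (𝓝[>] (0:ℝ)) (𝓝 ((∫ s in Set.Ioc (0:ℝ) r, g s) - 0)) :=
      tendsto_const_nhds.sub hsmall
    have heq : (fun ε => W r - W ε) =ᶠ[𝓝[>] (0:ℝ)]
        (fun ε => (∫ s in Set.Ioc (0:ℝ) r, g s) - ∫ s in Set.Ioc (0:ℝ) ε, g s) := by
      filter_upwards [Ioc_mem_nhdsGT_of_mem ⟨le_refl (0:ℝ), hr0⟩] with ε hε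
      have hsplit : (∫ s in Set.Ioc (0:ℝ) r, g s)
          = (∫ s in Set.Ioc (0:ℝ) ε, g s) + ∫ s in Set.Ioc ε r, g s := by
        rw [← MeasureTheory.setIntegral_union (Set.Ioc_disjoint_Ioc_of_le le_rfl) measurableSet_Ioc
          (hgint.mono_set (Set.Ioc_subset_Ioc_right hε.2))
          (hgint.mono_set (Set.Ioc_subset_Ioc_left hε.1.le)),
          Set.Ioc_union_Ioc_eq_Ioc hε.1.le hε.2]
      have h3 := hFTC ε hε
      linarith
    have h4 := tendsto_nhds_unique (t1.congr' heq) t2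
    linarith
  -- final assembly
  have hu0 : u r ≠ 0 := (hupos r hr).ne'
  have hd : deriv (fun s => v s / u s) r = (deriv v r * u r - v r * deriv u r) / u r ^ 2 :=
    (((hv1 r hr).hasDerivAt).div ((hu1 r hr).hasDerivAt) hu0).deriv
  have hra : (0:ℝ) < r ^ a := Real.rpow_pos_of_pos hr0 a
  have hint3 : ∫ s in Set.Ioc (0:ℝ) r, (s/r) ^ a * h s = (r ^ a)⁻¹ * W r := by
    rw [hIeq, ← integral_const_mul]
    apply setIntegral_congr_fun measurableSet_Ioc
    intro s hs
    have hs0 : 0 < s := hs.1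
    have hsr : (s/r) ^ a = s ^ a * (r ^ a)⁻¹ := by
      rw [Real.div_rpow hs0.le hr0.le, div_eq_mul_inv]
    show (s/r) ^ a * h s = (r ^ a)⁻¹ * (s ^ a * h s)
    rw [hsr]; ring
  rw [hd, hint3]
  show (deriv v r * u r - v r * deriv u r) / u r ^ 2
      = 1 / u r ^ 2 * ((r ^ a)⁻¹ * (r ^ a * (deriv v r * u r - deriv u r * v r)))
  field_simp

end
end
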